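/- Let G be any simple graph with s ≥ 2 edges and no isolated vertices, and let f = t^a − t^b ∈ I(X) with a = (a_1,…,a_s), b = (b_1,…,b_s) ∈ ℕ^s such that supp(a) ∩ supp(b) = ∅ and a_j ≤ q−2 and b_j ≤ q−2 for all j. If the edge e_i has an endpoint of degree 1 in G, then a_i = b_i = 0. -/

import Mathlib

/-!
Put a generator `g` of the cyclic group `K^*` at the pendant vertex `v` and `1` at every other
vertex. Since `v` lies on `e_i` only and `e_i` is not a loop, the edge monomials become
`t_i ↦ g` and `t_j ↦ 1` for `j ≠ i`, so `f` vanishing there reads `g ^ a_i = g ^ b_i`. As `g`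
has order `q - 1` and both exponents are at most `q - 2`, this forces `a_i = b_i`, and
disjointness of the supports makes both zero.
-/

open MvPolynomial

noncomputable section

/-- For `x : Fin n → M` and an edge `E = {j,k}` (as an element of `Sym2 (Fin n)`),
`edgeProd x E = x j * x k`. -/
def edgeProd {M : Type} [CommMonoid M] {n : ℕ} (x : Fin n → M) (E : Sym2 (Fin n)) : M :=
  Sym2.lift ⟨fun a b => x a * x b, fun a b => mul_comm (x a) (x b)⟩ E

/-- The vanishing ideal `I(X) ⊆ K[t_1,…,t_s]` of the algebraic toric set parameterized by
the edges `e_1,…,e_s` of a graph. -/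
def graphVanishingIdeal (K : Type) [Field K] {n s : ℕ} (e : Fin s → Sym2 (Fin n)) :
    Ideal (MvPolynomial (Fin s) K) :=
  Ideal.span {f | (∃ d, f.IsHomogeneous d) ∧
    ∀ x : Fin n → Kˣ, eval (fun i => ((edgeProd x (e i) : Kˣ) : K)) f = 0}

section EdgeProd

variable {M : Type} [CommMonoid M] {n : ℕ}

@[simp]
lemma edgeProd_mk (x : Fin n → M) (c d : Fin n) : edgeProd x s(c, d) = x c * x d := rfl

lemma edgeProd_mulSingle_of_notMem (v : Fin n) (g : M) {E : Sym2 (Fin n)} (hv : v ∉ E) :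
    edgeProd (Pi.mulSingle v g) E = 1 := by
  induction E using Sym2.ind with
  | _ c d =>
    have hc : c ≠ v := by rintro rfl; exact hv (Sym2.mem_mk_left _ _)
    have hd : d ≠ v := by rintro rfl; exact hv (Sym2.mem_mk_right _ _)
    simp [hc, hd]

lemma edgeProd_mulSingle_of_mem (v : Fin n) (g : M) {E : Sym2 (Fin n)} (hv : v ∈ E)
    (hE : ¬E.IsDiag) : edgeProd (Pi.mulSingle v g) E = g := by
  induction E using Sym2.ind with
  | _ c d =>
    have hcd : c ≠ d := by simpa using hE
    rcases Sym2.mem_iff.mp hv with rfl | rfl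
    · simp [hcd.symm]
    · simp [hcd]

end EdgeProd

lemma eval_eq_zero_of_mem_graphVanishingIdeal {K : Type} [Field K] {n s : ℕ}
    {e : Fin s → Sym2 (Fin n)} {f : MvPolynomial (Fin s) K} (hf : f ∈ graphVanishingIdeal K e)
    (x : Fin n → Kˣ) : eval (fun j => ((edgeProd x (e j) : Kˣ) : K)) f = 0 :=
  (Ideal.span_le (I := RingHom.ker _).mpr fun _ hg => hg.2 x) hf

lemma eval_mulSingle_monomial_one {R σ : Type} [CommSemiring R] [Fintype σ] [DecidableEq σ]
    (i : σ) (y : R) (c : σ →₀ ℕ) : eval (Pi.mulSingle i y) (monomial c 1) = y ^ c i := by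
  rw [eval_monomial, one_mul, Finsupp.prod_pow, Fintype.prod_eq_single i]
  · rw [Pi.mulSingle_eq_same]
  · intro j hj
    rw [Pi.mulSingle_eq_of_ne hj, one_pow]

lemma FiniteField.exists_orderOf_eq_card_sub_one (K : Type) [Field K] [Fintype K] :
    ∃ g : Kˣ, orderOf g = Fintype.card K - 1 := by
  classical
  rw [← Fintype.card_units, ← Nat.card_eq_fintype_card]
  exact IsCyclic.exists_ofOrder_eq_natCard

theorem pendant_edge_variable_does_not_occur_general
    (q n s : ℕ) (K : Type) [Field K] [Fintype K]
    (hcard : Fintype.card K = q)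
    (e : Fin s → Sym2 (Fin n))
    (hnd : ∀ i, ¬ (e i).IsDiag)
    (a b : Fin s →₀ ℕ)
    (hf : (monomial a 1 - monomial b 1 : MvPolynomial (Fin s) K) ∈
      graphVanishingIdeal K e)
    (hdisj : Disjoint a.support b.support)
    (ha : ∀ j, a j ≤ q - 2) (hb : ∀ j, b j ≤ q - 2)
    (i : Fin s) (v : Fin n) (hv : v ∈ e i)
    (hdeg : ∀ j, v ∈ e j → j = i) :
    a i = 0 ∧ b i = 0 := by
  classical
  obtain ⟨g, hg⟩ := FiniteField.exists_orderOf_eq_card_sub_one K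
  have hpoint : (fun j => ((edgeProd (Pi.mulSingle v g) (e j) : Kˣ) : K)) =
      Pi.mulSingle i (g : K) := by
    funext j
    by_cases hj : j = i
    · subst hj
      simp [edgeProd_mulSingle_of_mem v g hv (hnd j)]
    · have hvj : v ∉ e j := fun h => hj (hdeg j h)
      simp [edgeProd_mulSingle_of_notMem v g hvj, hj]
  have heval := eval_eq_zero_of_mem_graphVanishingIdeal hf (Pi.mulSingle v g)
  rw [hpoint, map_sub, eval_mulSingle_monomial_one, eval_mulSingle_monomial_one,
    sub_eq_zero] at heval
  have hq : 2 ≤ q := hcard ▸ Fintype.one_lt_card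
  have hord : orderOf (g : K) = q - 1 := by rw [orderOf_units, hg, hcard]
  have hai_lt : a i < orderOf (g : K) := by have := ha i; omega
  have hbi_lt : b i < orderOf (g : K) := by have := hb i; omega
  have hab : a i = b i := pow_injOn_Iio_orderOf hai_lt hbi_lt heval
  have hai : a i = 0 := by
    by_contra h
    exact Finset.disjoint_left.mp hdisj (Finsupp.mem_support_iff.mpr h)
      (Finsupp.mem_support_iff.mpr (hab ▸ h))
  exact ⟨hai, hab ▸ hai⟩

/-- Let `G` be a simple graph with `s ≥ 2` edges and no isolated vertices and
let `f = t^a − t^b ∈ I(X)` with `supp(a) ∩ supp(b) = ∅` and all exponents `≤ q−2`. If the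
edge `e_i` has an endpoint `v` of degree `1` in `G` (i.e. `v ∈ e_i` and `e_i` is the only
edge containing `v`), then `a_i = b_i = 0`. -/
theorem pendant_edge_variable_does_not_occur
    (q n s : ℕ) (hq : 2 < q) (hs : 2 ≤ s) (K : Type) [Field K] [Fintype K]
    (hcard : Fintype.card K = q)
    (e : Fin s → Sym2 (Fin n)) (he : Function.Injective e)
    (hnd : ∀ i, ¬ (e i).IsDiag)
    (hiso : ∀ v : Fin n, ∃ i, v ∈ e i)
    (a b : Fin s →₀ ℕ)
    (hf : (monomial a 1 - monomial b 1 : MvPolynomial (Fin s) K) ∈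
      graphVanishingIdeal K e)
    (hdisj : Disjoint a.support b.support)
    (ha : ∀ j, a j ≤ q - 2) (hb : ∀ j, b j ≤ q - 2)
    (i : Fin s) (v : Fin n) (hv : v ∈ e i)
    (hdeg : ∀ j, v ∈ e j → j = i) :
    a i = 0 ∧ b i = 0 :=
  pendant_edge_variable_does_not_occur_general q n s K hcard e hnd a b hf hdisj ha hb i v hv hdeg
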